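/- No 3-regular, 3-connected, triangle-free graph admits a P3-cutset or a strong parity star-cutset. -/

import Mathlib

open SimpleGraph

variable {V : Type*}

/-- A walk is an *induced (chordless) path* if it is a path and every edge of `G` joining
two of its vertices is an edge of the path. -/
def IsIndPath (G : SimpleGraph V) {u v : V} (p : G.Walk u v) : Prop :=
  p.IsPath ∧ ∀ x ∈ p.support, ∀ y ∈ p.support, G.Adj x y → s(x, y) ∈ p.edges

/-- The interior (set of internal vertices) of a walk from `u` to `v`. -/
def interiorSet {G : SimpleGraph V} {u v : V} (p : G.Walk u v) : Set V :=
  {x | x ∈ p.support ∧ x ≠ u ∧ x ≠ v}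

/-- An *induced cycle*: a cycle such that every edge of `G` joining two of its vertices is an
edge of the cycle. -/
def IsIndCycle (G : SimpleGraph V) {u : V} (c : G.Walk u u) : Prop :=
  c.IsCycle ∧ ∀ x ∈ c.support, ∀ y ∈ c.support, G.Adj x y → s(x, y) ∈ c.edges

/-- A *pentagraph*: every cycle has length at least five, and every induced cycle of odd
length has length exactly five. -/
def IsPentagraph (G : SimpleGraph V) : Prop :=
  (∀ (u : V) (c : G.Walk u u), c.IsCycle → 5 ≤ c.length) ∧
  (∀ (u : V) (c : G.Walk u u), IsIndCycle G c → Odd c.length → c.length = 5)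

/-- Removing the vertex set `X` disconnects `G`: two vertices outside `X` are not joined by
any path avoiding `X`. -/
def RemovalDisconnects (G : SimpleGraph V) (X : Set V) : Prop :=
  ∃ a b : ↥(Xᶜ), ¬ (G.induce Xᶜ).Reachable a b

/-- `G` admits a `P₃`-cutset: an induced three-vertex path whose deletion disconnects `G`. -/
def HasP3Cutset (G : SimpleGraph V) : Prop :=
  ∃ v₁ v₂ v₃ : V, G.Adj v₁ v₂ ∧ G.Adj v₂ v₃ ∧ ¬ G.Adj v₁ v₃ ∧ v₁ ≠ v₃ ∧
    RemovalDisconnects G ({v₁, v₂, v₃} : Set V)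

/-- `A` is (the vertex set of) a connected component of `G ∖ X`. -/
def IsCompOf (G : SimpleGraph V) (X : Set V) (A : Set V) : Prop :=
  A.Nonempty ∧ A ⊆ Xᶜ ∧ (G.induce A).Connected ∧
    ∀ u ∈ A, ∀ w ∈ Xᶜ, G.Adj u w → w ∈ A

/-- `G` admits a strong parity star-cutset. -/
def HasStrongParityStarCutset (G : SimpleGraph V) : Prop :=
  ∃ X : Set V, RemovalDisconnects G X ∧
    ∃ x ∈ X, (∀ y ∈ X, y ≠ x → G.Adj x y) ∧
      ∃ A : Set V, IsCompOf G X A ∧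
        (∀ y ∈ X, y ≠ x → ∀ z ∈ X, z ≠ x → y ≠ z →
          ∃ p : G.Walk y z, IsIndPath G p ∧ Even p.length ∧ interiorSet p ⊆ A) ∧
        (∃ a ∈ A, G.Adj x a)

/-- `G` admits a clique cutset. -/
def HasCliqueCutset (G : SimpleGraph V) : Prop :=
  ∃ X : Set V, G.IsClique X ∧ RemovalDisconnects G X

/-- Vertices of the Petersen graph: 2-element subsets of a 5-element set. -/
abbrev KVert : Type := {s : Finset (Fin 5) // s.card = 2}

/-- The Petersen graph, as the Kneser graph on 2-element subsets of a 5-element set. -/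
def petersen : SimpleGraph KVert where
  Adj a b := Disjoint (a : Finset (Fin 5)) (b : Finset (Fin 5))
  symm := ⟨fun a b h => h.symm⟩
  loopless := by
    constructor
    intro a h
    change Disjoint (a : Finset (Fin 5)) (a : Finset (Fin 5)) at h
    rw [disjoint_self] at h
    have h2 := a.2
    simp [h] at h2

def pA : KVert := ⟨{0, 1}, by decide⟩
def pB : KVert := ⟨{2, 3}, by decide⟩

/-- The Petersen graph minus one edge. -/
def petersen0 : SimpleGraph KVert := petersen.deleteEdges {s(pA, pB)}

/-- The Petersen graph minus one vertex. -/
def petersen1 : SimpleGraph {x : KVert // x ≠ pA} := petersen.induce {x : KVert | x ≠ pA}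

/-- The Petersen graph minus two adjacent vertices. -/
def petersen2 : SimpleGraph {x : KVert // x ≠ pA ∧ x ≠ pB} :=
  petersen.induce {x : KVert | x ≠ pA ∧ x ≠ pB}

/-- Two nonadjacent vertices are *linked*: joined by two induced paths, both of length at
least three, of different parity. -/
def Linked (H : SimpleGraph V) (s t : V) : Prop :=
  ∃ (p q : H.Walk s t), IsIndPath H p ∧ IsIndPath H q ∧
    3 ≤ p.length ∧ 3 ≤ q.length ∧ p.length % 2 ≠ q.length % 2

/-- Two vertices are *odd-linked*: joined by an induced path of odd length at least five. -/
def OddLinked (H : SimpleGraph V) (s t : V) : Prop :=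
  ∃ p : H.Walk s t, IsIndPath H p ∧ Odd p.length ∧ 5 ≤ p.length

/-- A *jump* over a hole with vertex set `C`: an induced path whose ends are distinct,
nonadjacent vertices of `C` and whose other vertices avoid `C`. -/
def IsJump (G : SimpleGraph V) (C : Set V) {s t : V} (P : G.Walk s t) : Prop :=
  IsIndPath G P ∧ s ∈ C ∧ t ∈ C ∧ s ≠ t ∧ ¬ G.Adj s t ∧
    ∀ x ∈ P.support, x ∈ C → x = s ∨ x = t

/-- A jump *across* the vertex `c` of `C`. -/
def IsJumpAcross (G : SimpleGraph V) (C : Set V) {s t : V} (P : G.Walk s t) (c : V) : Prop :=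
  IsJump G C P ∧ c ∈ C ∧ G.Adj c s ∧ G.Adj c t

/-- A *local* jump: no vertex of `C` other than `c, s, t` has a neighbour in the interior. -/
def IsLocalJump (G : SimpleGraph V) (C : Set V) {s t : V} (P : G.Walk s t) : Prop :=
  IsJump G C P ∧ ∃ c : V, c ∈ C ∧ G.Adj c s ∧ G.Adj c t ∧
    ∀ x ∈ C, x ≠ c → x ≠ s → x ≠ t → ∀ y ∈ interiorSet P, ¬ G.Adj x y

/-- A *short* jump: a jump of length three. -/
def IsShortJump (G : SimpleGraph V) (C : Set V) {s t : V} (P : G.Walk s t) : Prop :=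
  IsJump G C P ∧ P.length = 3

/-- `G` is three-connected. -/
def ThreeConnected (G : SimpleGraph V) : Prop :=
  4 ≤ Nat.card V ∧ ∀ S : Set V, S.ncard < 3 → (G.induce Sᶜ).Connected

/-!
Both kinds of cutset are stars `X` centred at a vertex `x` that has a neighbour `w` outside `X`.
As `x` has degree three, either `|X| ≤ 2`, or `X ∖ {x}` consists of the two neighbours of `x`
other than `w`. In the second case `x` is a pendant vertex of `G ∖ (X ∖ {x})` hanging from
`w ∉ X`, so `X ∖ {x}` separates `G` as well as `X` does. Either way at most two vertices
separate `G`, contradicting 3-connectivity.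
-/

variable {G : SimpleGraph V}

namespace SimpleGraph

lemma reachable_induce_iff_exists_walk {s : Set V} {u v : V} (hu : u ∈ s) (hv : v ∈ s) :
    (G.induce s).Reachable ⟨u, hu⟩ ⟨v, hv⟩ ↔ ∃ p : G.Walk u v, ∀ y ∈ p.support, y ∈ s := by
  constructor
  · rintro ⟨p⟩
    let q : G.Walk u v := p.map (Embedding.induce s).toHom
    refine ⟨q, fun y hy => ?_⟩
    obtain ⟨y', -, rfl⟩ := List.mem_map.mp (Walk.support_map _ p ▸ hy)
    exact y'.2
  · rintro ⟨p, hp⟩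
    exact ⟨p.induce s hp⟩

/-- A walk to `w` that may pass through `x` can be cut short at `w`, because `w` is the only
neighbour of `x` outside `X`. -/
lemma exists_walk_compl_of_walk_compl_diff_singleton {X : Set V} {x w a : V}
    (hx : ∀ u, G.Adj x u → u ∈ X ∨ u = w) (p : G.Walk a w)
    (hp : ∀ y ∈ p.support, y ∈ (X \ {x})ᶜ) (ha : a ∈ Xᶜ) :
    ∃ q : G.Walk a w, ∀ y ∈ q.support, y ∈ Xᶜ := by
  induction p with
  | nil => exact ⟨.nil, by simpa using ha⟩
  | @cons a c _ hac p ih =>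
    by_cases hcx : c = x
    · subst hcx
      obtain rfl := (hx a hac.symm).resolve_left ha
      exact ⟨.nil, by simpa using ha⟩
    · have hc : c ∈ Xᶜ := fun hcX => hp c (by simp) ⟨hcX, hcx⟩
      obtain ⟨q, hq⟩ := ih hx (fun y hy => hp y (by simp [hy])) hc
      refine ⟨.cons hac q, ?_⟩
      simp only [Walk.support_cons, List.mem_cons, forall_eq_or_imp]
      exact ⟨ha, hq⟩

end SimpleGraph

lemma RemovalDisconnects.diff_singleton {X : Set V} {x w : V} (hw : w ∉ X)
    (hx : ∀ u, G.Adj x u → u ∈ X ∨ u = w) (h : RemovalDisconnects G X) :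
    RemovalDisconnects G (X \ {x}) := by
  obtain ⟨⟨a, ha⟩, ⟨b, hb⟩, hab⟩ := h
  by_contra hcon
  simp only [RemovalDisconnects, not_exists, not_not] at hcon
  have reach_w : ∀ c (hc : c ∈ Xᶜ), (G.induce Xᶜ).Reachable ⟨c, hc⟩ ⟨w, hw⟩ := by
    intro c hc
    have hsub : Xᶜ ⊆ (X \ {x})ᶜ := Set.compl_subset_compl.mpr Set.sdiff_subset
    obtain ⟨p, hp⟩ := (reachable_induce_iff_exists_walk (hsub hc) (hsub hw)).mp
      (hcon ⟨c, hsub hc⟩ ⟨w, hsub hw⟩)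
    exact (reachable_induce_iff_exists_walk hc hw).mpr
      (exists_walk_compl_of_walk_compl_diff_singleton hx p hp hc)
  exact hab ((reach_w a ha).trans (reach_w b hb).symm)

lemma ThreeConnected.not_removalDisconnects (hG : ThreeConnected G) {S : Set V}
    (hS : S.ncard < 3) : ¬ RemovalDisconnects G S := by
  rintro ⟨a, b, hab⟩
  exact hab ((hG.2 S hS).preconnected a b)

lemma ThreeConnected.not_removalDisconnects_star (hG : ThreeConnected G) {X : Set V} {x w : V}
    (hdeg : (G.neighborSet x).ncard = 3) (hstar : ∀ y ∈ X, y ≠ x → G.Adj x y)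
    (hxw : G.Adj x w) (hw : w ∉ X) : ¬ RemovalDisconnects G X := by
  have hfin : (G.neighborSet x).Finite := Set.finite_of_ncard_pos (by omega)
  have hsub : X \ {x} ⊆ G.neighborSet x \ {w} := fun y ⟨hyX, hyx⟩ =>
    ⟨hstar y hyX hyx, fun hyw => hw (hyw ▸ hyX)⟩
  have hcard : (G.neighborSet x \ {w}).ncard = 2 := by
    rw [Set.ncard_sdiff_singleton_of_mem (G.mem_neighborSet x w |>.mpr hxw), hdeg]
  rcases (Set.ncard_le_ncard hsub hfin.sdiff).lt_or_eq with hlt | heq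
  · apply hG.not_removalDisconnects
    have := Set.ncard_le_ncard_sdiff_add_ncard X {x}
    rw [Set.ncard_singleton] at this
    omega
  · have hN : X \ {x} = G.neighborSet x \ {w} :=
      Set.eq_of_subset_of_ncard_le hsub heq.ge hfin.sdiff
    have hx : ∀ u, G.Adj x u → u ∈ X ∨ u = w := fun u hu =>
      (em (u = w)).symm.imp (fun huw => (hN.symm ▸ ⟨hu, huw⟩ : u ∈ X \ {x}).1) id
    exact fun h => hG.not_removalDisconnects (by omega) (h.diff_singleton hw hx)

theorem cubic_no_cutsets_general {V : Type*} (G : SimpleGraph V)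
    (hreg : ∀ v : V, (G.neighborSet v).ncard = 3)
    (hconn : ThreeConnected G) :
    ¬ HasP3Cutset G ∧ ¬ HasStrongParityStarCutset G := by
  constructor
  · rintro ⟨v₁, v₂, v₃, h₁₂, h₂₃, -, -, hd⟩
    obtain ⟨w, hw, hw₁₃⟩ : ∃ w ∈ G.neighborSet v₂, w ∉ ({v₁, v₃} : Set V) :=
      Set.exists_mem_notMem_of_ncard_lt_ncard
        ((Set.ncard_insert_le _ _).trans_lt (by simp [hreg v₂]))
    have hw₂ : w ≠ v₂ := fun h => G.irrefl (h ▸ hw)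
    refine hconn.not_removalDisconnects_star (hreg v₂) ?_ hw (by simp_all) hd
    rintro y (rfl | rfl | rfl) hy
    exacts [h₁₂.symm, (hy rfl).elim, h₂₃]
  · rintro ⟨X, hd, x, -, hstar, A, hA, -, a, haA, hxa⟩
    exact hconn.not_removalDisconnects_star (hreg x) hstar hxa (hA.2.1 haA) hd

/-- no 3-regular, 3-connected, triangle-free graph admits a P₃-cutset or a
strong parity star-cutset. -/
theorem cubic_no_cutsets {V : Type*} [Fintype V] (G : SimpleGraph V)
    (hreg : ∀ v : V, (G.neighborSet v).ncard = 3)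
    (hconn : ThreeConnected G) (htri : G.CliqueFree 3) :
    ¬ HasP3Cutset G ∧ ¬ HasStrongParityStarCutset G :=
  cubic_no_cutsets_general G hreg hconn
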